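/- arXiv:2208.00144 — 4 statements merged into one kernel-verified Lean document; each statement's English description precedes it below -/
import Mathlib

section
/- Let (X, ε) be a locally compact paracompact Hausdorff space with a proper coarsely connected coarse structure, let X +_f W and X +_g Z be perspective compactifications of X, and let id+φ : X +_f W → X +_g Z be a continuous map restricting to the identity on X. If X +_f W is Ψ-accessible and every map in Ψ is continuous, then X +_g Z is Ψ-accessible. -/
namespace Paper

open Set Topology

/-! ### Coarse structures -/

/-- The inverse of a relation `e ⊆ X × X`. -/
def invRel {X : Type*} (e : Set (X × X)) : Set (X × X) := {p | (p.2, p.1) ∈ e}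

/-- The composition of relations: `compRel e e' = {(a,b) | ∃ c, (a,c) ∈ e ∧ (c,b) ∈ e'}`.
This is `e' ∘ e` in the paper's notation. -/
def compRel {X : Type*} (e e' : Set (X × X)) : Set (X × X) :=
  {p | ∃ c, (p.1, c) ∈ e ∧ (c, p.2) ∈ e'}

/-- A coarse structure on a set `X`. -/
def IsCoarseStructure {X : Type*} (ε : Set (Set (X × X))) : Prop :=
  Set.diagonal X ∈ ε ∧
  (∀ e ∈ ε, ∀ e' : Set (X × X), e' ⊆ e → e' ∈ ε) ∧
  (∀ e ∈ ε, ∀ e' ∈ ε, e ∪ e' ∈ ε) ∧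
  (∀ e ∈ ε, invRel e ∈ ε) ∧
  (∀ e ∈ ε, ∀ e' ∈ ε, compRel e e' ∈ ε)

/-- The coarse structure generated by a family `A` of subsets of `X × X`:
the intersection of all coarse structures containing `A`. -/
def genCoarse {X : Type*} (A : Set (Set (X × X))) : Set (Set (X × X)) :=
  ⋂₀ {ε | IsCoarseStructure ε ∧ A ⊆ ε}

/-- The `u`-neighbourhood `𝔅(B, u)` of a subset `B`. -/
def Bnh {X : Type*} (B : Set X) (u : Set (X × X)) : Set X := {x | ∃ y ∈ B, (x, y) ∈ u}

/-- A subset `B` is bounded for the coarse structure `ε` if `B × B ∈ ε`. -/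
def CBounded {X : Type*} (ε : Set (Set (X × X))) (B : Set X) : Prop := B ×ˢ B ∈ ε

/-- A map is bornologous if it sends entourages to entourages. -/
def Bornologous {X Y : Type*} (ε : Set (Set (X × X))) (ζ : Set (Set (Y × Y)))
    (f : X → Y) : Prop :=
  ∀ e ∈ ε, Prod.map f f '' e ∈ ζ

/-- A map is (coarsely) proper if preimages of bounded sets are bounded. -/
def CProper {X Y : Type*} (ε : Set (Set (X × X))) (ζ : Set (Set (Y × Y)))
    (f : X → Y) : Prop :=
  ∀ B : Set Y, CBounded ζ B → CBounded ε (f ⁻¹' B)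

/-- A coarse map is a proper bornologous map. -/
def CoarseMap {X Y : Type*} (ε : Set (Set (X × X))) (ζ : Set (Set (Y × Y)))
    (f : X → Y) : Prop :=
  Bornologous ε ζ f ∧ CProper ε ζ f

/-- Two maps `f g : S → X` are close if `{(f s, g s) | s ∈ S}` is an entourage. -/
def Close {S X : Type*} (ε : Set (Set (X × X))) (f g : S → X) : Prop :=
  Set.range (fun s => (f s, g s)) ∈ ε

/-- A coarse equivalence: a coarse map with a coarse quasi-inverse. -/
def CoarseEquiv {X Y : Type*} (ε : Set (Set (X × X))) (ζ : Set (Set (Y × Y)))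
    (f : X → Y) : Prop :=
  CoarseMap ε ζ f ∧
    ∃ g : Y → X, CoarseMap ζ ε g ∧ Close ζ (f ∘ g) id ∧ Close ε (g ∘ f) id

/-- The subspace coarse structure on `A ⊆ Y`. -/
def SubCoarse {Y : Type*} (ζ : Set (Set (Y × Y))) (A : Set Y) : Set (Set (↥A × ↥A)) :=
  {e | Prod.map (Subtype.val : A → Y) (Subtype.val : A → Y) '' e ∈ ζ}

/-- A coarse embedding: a coarse map which is a coarse equivalence onto its image with
the subspace coarse structure. -/
def CoarseEmbedding {X Y : Type*} (ε : Set (Set (X × X))) (ζ : Set (Set (Y × Y)))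
    (f : X → Y) : Prop :=
  CoarseMap ε ζ f ∧ CoarseEquiv ε (SubCoarse ζ (Set.range f)) (Set.rangeFactorization f)

/-- A coarse space is coarsely connected if every pair lies in some entourage. -/
def CoarselyConnected {X : Type*} (ε : Set (Set (X × X))) : Prop :=
  ∀ x y : X, ∃ e ∈ ε, (x, y) ∈ e

/-- `A` is quasi-dense if `𝔅(A, e) = X` for some entourage `e`. -/
def QuasiDense {X : Type*} (ε : Set (Set (X × X))) (A : Set X) : Prop :=
  ∃ e ∈ ε, Bnh A e = Set.univ

/-- A subset of a topological space is topologically bounded if its closure is compact. -/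
def TopBounded {X : Type*} [TopologicalSpace X] (B : Set X) : Prop := IsCompact (closure B)

/-- A coarse structure on a topological space is proper if it contains a neighbourhood of
the diagonal and every bounded set is topologically bounded. -/
def ProperCoarse {X : Type*} [TopologicalSpace X] (ε : Set (Set (X × X))) : Prop :=
  (∃ e ∈ ε, e ∈ nhdsSet (Set.diagonal X)) ∧ ∀ B : Set X, CBounded ε B → TopBounded B

/-! ### Artin–Wraith glueings -/

/-- An admissible map `f : Closed(X) → Closed(Y)`. -/
def Admissible {X Y : Type*} [TopologicalSpace X] [TopologicalSpace Y]
    (f : Set X → Set Y) : Prop :=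
  (∀ A : Set X, IsClosed A → IsClosed (f A)) ∧
  (∀ A B : Set X, IsClosed A → IsClosed B → f (A ∪ B) = f A ∪ f B) ∧
  f ∅ = ∅

/-- The closed sets of the Artin–Wraith glueing `X +_f Y`. -/
def AWClosed {X Y : Type*} [TopologicalSpace X] [TopologicalSpace Y]
    (f : Set X → Set Y) : Set (Set (X ⊕ Y)) :=
  {A | IsClosed (Sum.inl ⁻¹' A) ∧ IsClosed (Sum.inr ⁻¹' A) ∧
    Sum.inr '' f (Sum.inl ⁻¹' A) ⊆ A}

/-- The topology of the Artin–Wraith glueing `X +_f Y` on `X ⊕ Y`. (For admissible `f`,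
the closed sets of this topology are exactly the members of `AWClosed f`.) -/
def AWTop {X Y : Type*} [TopologicalSpace X] [TopologicalSpace Y]
    (f : Set X → Set Y) : TopologicalSpace (X ⊕ Y) :=
  TopologicalSpace.generateFrom (compl '' AWClosed f)

/-- `X +_f W` is a (Hausdorff) compactification of `X`: a compact Hausdorff Artin–Wraith
glueing in which `X` is dense. -/
def IsCompactification {X W : Type*} [TopologicalSpace X] [TopologicalSpace W]
    (f : Set X → Set W) : Prop :=
  Admissible f ∧
  @CompactSpace (X ⊕ W) (AWTop f) ∧
  @T2Space (X ⊕ W) (AWTop f) ∧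
  @Dense (X ⊕ W) (AWTop f) (Set.range Sum.inl)

/-- A relation `e ⊆ X × X` is proper if `𝔅(B,e)` and `𝔅(B,e⁻¹)` are topologically
bounded for every topologically bounded `B`. -/
def ProperRel {X : Type*} [TopologicalSpace X] (e : Set (X × X)) : Prop :=
  ∀ B : Set X, TopBounded B → TopBounded (Bnh B e) ∧ TopBounded (Bnh B (invRel e))

/-- `e` is a perspective subset of `X × X` with respect to the compactification `X +_f W`. -/
def PerspRel {X W : Type*} [TopologicalSpace X] [TopologicalSpace W]
    (f : Set X → Set W) (e : Set (X × X)) : Prop :=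
  ProperRel e ∧
  ∀ y : W, ∀ V : Set (X ⊕ W), IsOpen[AWTop f] V → Sum.inr y ∈ V →
    ∃ U : Set (X ⊕ W), IsOpen[AWTop f] U ∧ Sum.inr y ∈ U ∧ U ⊆ V ∧
      ∀ p ∈ e, Sum.inl p.1 ∈ U → Sum.inl p.2 ∈ V

/-- A perspective compactification of the coarse space `(X, ε)`. -/
def PerspCompactification {X W : Type*} [TopologicalSpace X] [TopologicalSpace W]
    (ε : Set (Set (X × X))) (f : Set X → Set W) : Prop :=
  IsCompactification f ∧ ∀ e ∈ ε, PerspRel f e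

/-- The pullback of `f : Closed(X) → Closed(W)` with respect to `π : Y → X` and
`ϖ : Z → W`. -/
def pullbackAW {X Y Z W : Type*} [TopologicalSpace X] [TopologicalSpace Z]
    (f : Set X → Set W) (π : Y → X) (ϖ : Z → W) (A : Set Y) : Set Z :=
  closure (ϖ ⁻¹' (f (closure (π '' A))))

/-! ### Group actions -/

/-- `φ : G → X → X` is an action by homeomorphisms. -/
def IsActionByHomeos {G X : Type*} [Group G] [TopologicalSpace X]
    (φ : G → X → X) : Prop :=
  (∀ g : G, Continuous (φ g)) ∧ (∀ x : X, φ 1 x = x) ∧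
    ∀ g h : G, ∀ x : X, φ (g * h) x = φ g (φ h x)

/-- A properly discontinuous action. -/
def ProperlyDisc {G X : Type*} [TopologicalSpace X] (φ : G → X → X) : Prop :=
  ∀ K : Set X, IsCompact K → {g : G | (φ g '' K ∩ K).Nonempty}.Finite

/-- A cocompact action. -/
def CocompactAct {G X : Type*} [TopologicalSpace X] (φ : G → X → X) : Prop :=
  ∃ K : Set X, IsCompact K ∧ (⋃ g : G, φ g '' K) = Set.univ

/-- The saturation `Sat(A) = {(φ(g,x), φ(g,x')) : g ∈ G, x, x' ∈ A}`. -/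
def Sat {G X : Type*} (φ : G → X → X) (A : Set X) : Set (X × X) :=
  {p | ∃ g : G, ∃ x ∈ A, ∃ x' ∈ A, p = (φ g x, φ g x')}

/-- The coarse structure `ε_φ` on `X` generated by the saturations of topologically
bounded sets. -/
def coarseOfAction {G X : Type*} [TopologicalSpace X] (φ : G → X → X) :
    Set (Set (X × X)) :=
  genCoarse {e | ∃ A : Set X, TopBounded A ∧ e = Sat φ A}

/-- The saturation for the left multiplication action of a group on itself. -/
def SatMul {G : Type*} [Group G] (U : Set G) : Set (G × G) :=
  {p | ∃ g : G, ∃ u ∈ U, ∃ u' ∈ U, p = (g * u, g * u')}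

/-- The coarse structure `ε_G` on the group `G`, generated by the saturations of
finite subsets under the left multiplication action. -/
def coarseGroup (G : Type*) [Group G] : Set (Set (G × G)) :=
  genCoarse {e | ∃ U : Set G, U.Finite ∧ e = SatMul U}

/-- The compactification `X +_f W` is group-theoretically perspective with respect to the
action `φ`. -/
def GTPerspective {G X W : Type*} [TopologicalSpace X] [TopologicalSpace W]
    (φ : G → X → X) (f : Set X → Set W) : Prop :=
  ∀ K : Set X, IsCompact K → ∀ y : W, ∀ U : Set (X ⊕ W),
    IsOpen[AWTop f] U → Sum.inr y ∈ U →
      ∃ V : Set (X ⊕ W), IsOpen[AWTop f] V ∧ Sum.inr y ∈ V ∧ V ⊆ U ∧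
        ∀ g : G, (∃ x ∈ K, Sum.inl (φ g x) ∈ V) → ∀ x ∈ K, Sum.inl (φ g x) ∈ U

/-! ### Rays and accessibility -/

/-- A family `Ψ` of rays in `X` based at `p`: each member is a pair `(A, γ)` of a closed
unbounded subset `A ⊆ [0,∞)` containing `0` and a map `γ : ℝ → X` (regarded on `A`) which
is injective on `A`, proper, and satisfies `γ 0 = p`. -/
def GoodRayFamily {X : Type*} [TopologicalSpace X] (p : X)
    (Ψ : Set (Set ℝ × (ℝ → X))) : Prop :=
  ∀ r ∈ Ψ, r.1 ⊆ Set.Ici (0 : ℝ) ∧ IsClosed r.1 ∧ ¬Bornology.IsBounded r.1 ∧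
    (0 : ℝ) ∈ r.1 ∧ r.2 0 = p ∧ Set.InjOn r.2 r.1 ∧
    ∀ B : Set X, TopBounded B → Bornology.IsBounded (r.1 ∩ r.2 ⁻¹' B)

/-- The compactification `X +_f W` is `Ψ`-accessible. -/
def AccessibleComp {X W : Type*} [TopologicalSpace X] [TopologicalSpace W]
    (f : Set X → Set W) (Ψ : Set (Set ℝ × (ℝ → X))) : Prop :=
  (∀ w : W, ∃ r ∈ Ψ, f (closure (r.2 '' r.1)) = {w}) ∧
  ∀ r ∈ Ψ, ∃ w : W, f (closure (r.2 '' r.1)) = {w}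


section Aux

variable {X W : Type*} [TopologicalSpace X] [TopologicalSpace W]

/-- Admissible maps are monotone on closed sets. -/
lemma admissible_mono {f : Set X → Set W} (hf : Admissible f) {A B : Set X}
    (hA : IsClosed A) (hB : IsClosed B) (hAB : A ⊆ B) : f A ⊆ f B := by
  have : f B = f A ∪ f B := by
    rw [← hf.2.1 A B hA hB, Set.union_eq_self_of_subset_left hAB]
  rw [this]; exact Set.subset_union_left

lemma awclosed_univ {f : Set X → Set W} (hf : Admissible f) :
    (Set.univ : Set (X ⊕ W)) ∈ AWClosed f := by
  refine ⟨by simpa using isClosed_univ, by simpa using isClosed_univ, by simp⟩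

/-- In `AWTop f`, a set is closed iff it belongs to `AWClosed f`. -/
lemma isClosed_awtop_iff {f : Set X → Set W} (hf : Admissible f) {C : Set (X ⊕ W)} :
    IsClosed[AWTop f] C ↔ C ∈ AWClosed f := by
  constructor
  · intro h
    have hgen : TopologicalSpace.GenerateOpen (compl '' AWClosed f) Cᶜ := by
      have := h.isOpen_compl
      exact this
    have main : ∀ U, TopologicalSpace.GenerateOpen (compl '' AWClosed f) U →
        Uᶜ ∈ AWClosed f := by
      intro U hU
      induction hU with
      | basic s hs =>
          obtain ⟨D, hD, rfl⟩ := hs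
          simpa using hD
      | univ =>
          refine ⟨by simpa using isClosed_empty, by simpa using isClosed_empty, ?_⟩
          simp [hf.2.2]
      | inter s t _ _ ihs iht =>
          rw [Set.compl_inter]
          refine ⟨?_, ?_, ?_⟩
          · rw [Set.preimage_union]; exact ihs.1.union iht.1
          · rw [Set.preimage_union]; exact ihs.2.1.union iht.2.1
          · rw [Set.preimage_union, hf.2.1 _ _ ihs.1 iht.1, Set.image_union]
            exact Set.union_subset_union ihs.2.2 iht.2.2
      | sUnion S _ ih =>
          have hcompl : (⋃₀ S)ᶜ = ⋂₀ (compl '' S) := by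
            simp [Set.sInter_image, Set.compl_sUnion]
          rw [hcompl]
          have hmem : ∀ t ∈ compl '' S, t ∈ AWClosed f := by
            rintro t ⟨s, hs, rfl⟩; exact ih s hs
          have hpre : Sum.inl ⁻¹' ⋂₀ (compl '' S) = ⋂ t ∈ compl '' S, Sum.inl ⁻¹' t := by
            ext x; simp
          have hpre2 : Sum.inr ⁻¹' ⋂₀ (compl '' S) = ⋂ t ∈ compl '' S, Sum.inr ⁻¹' t := by
            ext x; simp
          refine ⟨?_, ?_, ?_⟩
          · rw [hpre]
            exact isClosed_biInter fun t ht => (hmem t ht).1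
          · rw [hpre2]
            exact isClosed_biInter fun t ht => (hmem t ht).2.1
          · intro x hx
            obtain ⟨y, hy, rfl⟩ := hx
            intro t ht
            have h1 : Sum.inl ⁻¹' ⋂₀ (compl '' S) ⊆ Sum.inl ⁻¹' t :=
              Set.preimage_mono (Set.sInter_subset_of_mem ht)
            have hclosed : IsClosed (Sum.inl ⁻¹' ⋂₀ (compl '' S)) := by
              rw [hpre]; exact isClosed_biInter fun t ht => (hmem t ht).1
            have h2 : f (Sum.inl ⁻¹' ⋂₀ (compl '' S)) ⊆ f (Sum.inl ⁻¹' t) :=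
              admissible_mono hf hclosed (hmem t ht).1 h1
            exact (hmem t ht).2.2 ⟨y, h2 hy, rfl⟩
    have := main Cᶜ hgen
    simpa using this
  · intro h
    have hopen : IsOpen[AWTop f] Cᶜ := TopologicalSpace.GenerateOpen.basic _ ⟨C, h, rfl⟩
    exact @IsClosed.mk _ (AWTop f) C hopen

/-- Closure of `inl '' A` in the Artin–Wraith glueing. -/
lemma closure_inl_awtop {f : Set X → Set W} (hf : Admissible f) {A : Set X}
    (hA : IsClosed A) :
    closure[AWTop f] (Sum.inl '' A) = Sum.inl '' A ∪ Sum.inr '' f A := by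
  letI := AWTop f
  have hCcl : IsClosed (Sum.inl '' A ∪ Sum.inr '' (f A) : Set (X ⊕ W)) := by
    rw [isClosed_awtop_iff hf]
    refine ⟨?_, ?_, ?_⟩
    · have : Sum.inl ⁻¹' (Sum.inl '' A ∪ Sum.inr '' (f A) : Set (X ⊕ W)) = A := by
        ext x; simp
      rw [this]; exact hA
    · have : Sum.inr ⁻¹' (Sum.inl '' A ∪ Sum.inr '' (f A) : Set (X ⊕ W)) = f A := by
        ext x; simp
      rw [this]; exact hf.1 A hA
    · intro x hx
      have : Sum.inl ⁻¹' (Sum.inl '' A ∪ Sum.inr '' (f A) : Set (X ⊕ W)) = A := by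
        ext x; simp
      rw [this] at hx
      exact Or.inr hx
  apply Set.Subset.antisymm
  · exact closure_minimal (Set.subset_union_left) hCcl
  · refine Set.union_subset subset_closure ?_
    have hclcl : closure (Sum.inl '' A : Set (X ⊕ W)) ∈ AWClosed f :=
      (isClosed_awtop_iff hf).mp isClosed_closure
    have hsub : A ⊆ Sum.inl ⁻¹' closure (Sum.inl '' A : Set (X ⊕ W)) := by
      intro x hx
      exact subset_closure ⟨x, hx, rfl⟩
    have := admissible_mono hf hA hclcl.1 hsub
    intro y hy
    obtain ⟨w, hw, rfl⟩ := hy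
    exact hclcl.2.2 ⟨w, this hw, rfl⟩

end Aux

/-- if `id+φ : X +_f W → X +_g Z` is continuous, `X +_f W` is
`Ψ`-accessible and every map in `Ψ` is continuous, then `X +_g Z` is `Ψ`-accessible. -/
theorem stmt13 {X W Z : Type*} [TopologicalSpace X] [T2Space X] [LocallyCompactSpace X]
    [ParacompactSpace X] [TopologicalSpace W] [TopologicalSpace Z]
    (ε : Set (Set (X × X))) (hε : IsCoarseStructure ε)
    (hconn : CoarselyConnected ε) (hprop : ProperCoarse ε)
    (f : Set X → Set W) (g : Set X → Set Z)
    (hf : PerspCompactification ε f) (hg : PerspCompactification ε g)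
    (φ : W → Z)
    (hcont : Continuous[AWTop f, AWTop g] (Sum.map (id : X → X) φ))
    (p : X) (Ψ : Set (Set ℝ × (ℝ → X))) (hΨ : GoodRayFamily p Ψ)
    (hΨcont : ∀ r ∈ Ψ, ContinuousOn r.2 r.1)
    (hacc : AccessibleComp f Ψ) :
    AccessibleComp g Ψ := by
  letI tf : TopologicalSpace (X ⊕ W) := AWTop f
  letI tg : TopologicalSpace (X ⊕ Z) := AWTop g
  obtain ⟨⟨hfadm, hfcpt, hft2, hfdense⟩, -⟩ := hf
  obtain ⟨⟨hgadm, hgcpt, hgt2, hgdense⟩, -⟩ := hg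
  haveI : CompactSpace (X ⊕ W) := hfcpt
  haveI : T2Space (X ⊕ Z) := hgt2
  set h : X ⊕ W → X ⊕ Z := Sum.map (id : X → X) φ with hh
  have hhcont : Continuous h := hcont
  -- h maps inl '' A to inl '' A and inr '' s to inr '' (φ '' s)
  have himg : ∀ A : Set X, ∀ s : Set W,
      h '' (Sum.inl '' A ∪ Sum.inr '' s) = Sum.inl '' A ∪ Sum.inr '' (φ '' s) := by
    intro A s
    rw [Set.image_union, Set.image_image, Set.image_image, Set.image_image]
    simp [hh]
  -- key: for closed A, g A = φ '' f A
  have key : ∀ A : Set X, IsClosed A → g A = φ '' f A := by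
    intro A hA
    have hclf : closure (Sum.inl '' A : Set (X ⊕ W)) = Sum.inl '' A ∪ Sum.inr '' f A :=
      closure_inl_awtop hfadm hA
    have hclg : closure (Sum.inl '' A : Set (X ⊕ Z)) = Sum.inl '' A ∪ Sum.inr '' g A :=
      closure_inl_awtop hgadm hA
    have himage : h '' closure (Sum.inl '' A : Set (X ⊕ W))
        = Sum.inl '' A ∪ Sum.inr '' (φ '' f A) := by
      rw [hclf]; exact himg A (f A)
    -- h '' closure is closed (compact image in T2)
    have hcpt : IsCompact (closure (Sum.inl '' A : Set (X ⊕ W))) :=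
      isClosed_closure.isCompact
    have himcl : IsClosed (h '' closure (Sum.inl '' A : Set (X ⊕ W))) :=
      (hcpt.image hhcont).isClosed
    -- first inclusion: closure_g (inl '' A) ⊆ h '' closure_f (inl '' A)
    have hsub1 : closure (Sum.inl '' A : Set (X ⊕ Z))
        ⊆ h '' closure (Sum.inl '' A : Set (X ⊕ W)) := by
      apply closure_minimal ?_ himcl
      intro x hx
      obtain ⟨a, ha, rfl⟩ := hx
      exact ⟨Sum.inl a, subset_closure ⟨a, ha, rfl⟩, rfl⟩
    -- second inclusion: h '' closure_f ⊆ closure_g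
    have hsub2 : h '' closure (Sum.inl '' A : Set (X ⊕ W))
        ⊆ closure (Sum.inl '' A : Set (X ⊕ Z)) := by
      have := (hhcont.continuousOn (s := closure (Sum.inl '' A : Set (X ⊕ W))))
      have hmaps : h '' (Sum.inl '' A : Set (X ⊕ W)) ⊆ (Sum.inl '' A : Set (X ⊕ Z)) := by
        intro x hx
        obtain ⟨y, ⟨a, ha, rfl⟩, rfl⟩ := hx
        exact ⟨a, ha, rfl⟩
      calc h '' closure (Sum.inl '' A : Set (X ⊕ W))
          ⊆ closure (h '' (Sum.inl '' A : Set (X ⊕ W))) :=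
            image_closure_subset_closure_image hhcont
        _ ⊆ closure (Sum.inl '' A : Set (X ⊕ Z)) := closure_mono hmaps
    have heq : h '' closure (Sum.inl '' A : Set (X ⊕ W))
        = closure (Sum.inl '' A : Set (X ⊕ Z)) :=
      Set.Subset.antisymm hsub2 hsub1
    rw [himage, hclg] at heq
    -- extract g A = φ '' f A from the equality of unions
    apply Set.Subset.antisymm
    · intro z hz
      have : (Sum.inr z : X ⊕ Z) ∈ Sum.inl '' A ∪ Sum.inr '' (φ '' f A) := by
        rw [heq]; exact Or.inr ⟨z, hz, rfl⟩
      rcases this with ⟨a, _, hcontra⟩ | ⟨z', hz', hzz⟩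
      · exact absurd hcontra (by simp)
      · rwa [← Sum.inr_injective hzz]
    · intro z hz
      have : (Sum.inr z : X ⊕ Z) ∈ Sum.inl '' A ∪ Sum.inr '' g A := by
        rw [← heq]; exact Or.inr ⟨z, hz, rfl⟩
      rcases this with ⟨a, _, hcontra⟩ | ⟨z', hz', hzz⟩
      · exact absurd hcontra (by simp)
      · rwa [← Sum.inr_injective hzz]
  -- φ is surjective
  have hsurj : Function.Surjective φ := by
    intro z
    have hrange : IsClosed (Set.range h) := by
      exact (isCompact_range hhcont).isClosed
    have hsub : (Set.range (Sum.inl : X → X ⊕ Z)) ⊆ Set.range h := by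
      rintro x ⟨a, rfl⟩
      exact ⟨Sum.inl a, rfl⟩
    have hrangeuniv : Set.range h = Set.univ := by
      apply Set.eq_univ_of_univ_subset
      have := hgdense.closure_eq
      calc (Set.univ : Set (X ⊕ Z)) = closure (Set.range (Sum.inl : X → X ⊕ Z)) :=
            this.symm
        _ ⊆ closure (Set.range h) := closure_mono hsub
        _ = Set.range h := hrange.closure_eq
    have : (Sum.inr z : X ⊕ Z) ∈ Set.range h := hrangeuniv ▸ Set.mem_univ _
    obtain ⟨a, ha⟩ := this
    cases a with
    | inl x => exact absurd ha (by simp [hh])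
    | inr w => exact ⟨w, by simpa [hh] using ha⟩
  constructor
  · intro z
    obtain ⟨w, rfl⟩ := hsurj z
    obtain ⟨r, hr, hfr⟩ := hacc.1 w
    refine ⟨r, hr, ?_⟩
    rw [key _ isClosed_closure, hfr, Set.image_singleton]
  · intro r hr
    obtain ⟨w, hw⟩ := hacc.2 r hr
    exact ⟨φ w, by rw [key _ isClosed_closure, hw, Set.image_singleton]⟩

end Paper
end

section
/- Let (X, ε) and (Y, η) be locally compact paracompact Hausdorff spaces with proper coarsely connected coarse structures and let π : Y → X be a coarse equivalence with coarse inverse ϖ : X → Y. Let X +_f W be a perspective compactification of (X, ε) that is Ψ-accessible, and let f* be the pullback of f with respect to π and id_W, so that the induced compactification of Y is Y +_{f*} W. Then Y +_{f*} W is ϖ(Ψ)-accessible, where ϖ(Ψ) = {ϖ ∘ γ : γ ∈ Ψ}; that is, (1) for every w ∈ W there is γ ∈ Ψ with f*(Cl_Y(Im(ϖ ∘ γ))) = {w}, and (2) f*(Cl_Y(Im(ϖ ∘ γ))) is a singleton for every γ ∈ Ψ. -/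
/-!
In the Artin–Wraith glueing `X +_f W`, a point `w ∈ W` lies in the closure of `S ⊆ X` iff
`w ∈ f (closure S)`, and perspectivity of an entourage `e` says that moving `S` by `e` does
not change which points of `W` it accumulates at. Hence `f (closure S) = f (closure S')`
whenever `S` and `S'` are within an entourage of each other. Since the bornologous map `π`
moves the closure of `ϖ(S)` only by the image of a neighbourhood of the diagonal, and
`π ∘ ϖ` is close to the identity, `π(closure ϖ(S))` is within an entourage of `S`; so `f*`
takes the ray `ϖ ∘ γ` to the closure of `f (closure (Im γ))`, which is the same singleton
because points of `W` are closed in the Hausdorff space `X +_f W`.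
-/

namespace Paper

open Set Topology

section ArtinWraith

variable {X W : Type*} [TopologicalSpace X] [TopologicalSpace W] {f : Set X → Set W}

theorem Admissible.mono (hf : Admissible f) {A B : Set X} (hA : IsClosed A) (hB : IsClosed B)
    (h : A ⊆ B) : f A ⊆ f B := by
  rw [← union_eq_self_of_subset_left h, hf.2.1 A B hA hB]
  exact subset_union_left

theorem empty_mem_AWClosed (hf : Admissible f) : ∅ ∈ AWClosed f :=
  ⟨isClosed_empty, isClosed_empty, by simp [hf.2.2]⟩

theorem union_mem_AWClosed (hf : Admissible f) {A B : Set (X ⊕ W)} (hA : A ∈ AWClosed f)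
    (hB : B ∈ AWClosed f) : A ∪ B ∈ AWClosed f := by
  refine ⟨hA.1.union hB.1, hA.2.1.union hB.2.1, ?_⟩
  rw [preimage_union, hf.2.1 _ _ hA.1 hB.1, image_union]
  exact union_subset_union hA.2.2 hB.2.2

theorem sInter_mem_AWClosed (hf : Admissible f) {T : Set (Set (X ⊕ W))} (hT : T ⊆ AWClosed f) :
    ⋂₀ T ∈ AWClosed f := by
  have hX : IsClosed (Sum.inl ⁻¹' ⋂₀ T : Set X) := by
    rw [preimage_sInter]
    exact isClosed_biInter fun A hA => (hT hA).1
  refine ⟨hX, ?_, ?_⟩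
  · rw [preimage_sInter]
    exact isClosed_biInter fun A hA => (hT hA).2.1
  · rintro _ ⟨y, hy, rfl⟩
    refine mem_sInter.2 fun A hA => (hT hA).2.2 ⟨y, ?_, rfl⟩
    exact hf.mono hX (hT hA).1 (preimage_mono (sInter_subset_of_mem hA)) hy

theorem isClosed_AWTop_iff (hf : Admissible f) {A : Set (X ⊕ W)} :
    IsClosed[AWTop f] A ↔ A ∈ AWClosed f := by
  refine ⟨fun h => ?_, fun h => (@isOpen_compl_iff _ _ (AWTop f)).1 (.basic _ ⟨A, h, rfl⟩)⟩
  suffices ∀ U, TopologicalSpace.GenerateOpen (compl '' AWClosed f) U → Uᶜ ∈ AWClosed f by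
    simpa using this _ ((@isOpen_compl_iff _ _ (AWTop f)).2 h)
  intro U hU
  induction hU with
  | basic s hs => obtain ⟨B, hB, rfl⟩ := hs; rwa [compl_compl]
  | univ => simpa using empty_mem_AWClosed hf
  | inter s t _ _ ihs iht => rw [compl_inter]; exact union_mem_AWClosed hf ihs iht
  | sUnion S _ ih =>
    rw [compl_sUnion]
    exact sInter_mem_AWClosed hf (by rintro _ ⟨s, hs, rfl⟩; exact ih s hs)

theorem continuous_inr_AWTop : Continuous[_, AWTop f] (Sum.inr : W → X ⊕ W) := by
  refine continuous_generateFrom_iff.2 ?_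
  rintro _ ⟨A, hA, rfl⟩
  exact hA.2.1.isOpen_compl

theorem t1Space_of_t1Space_AWTop (h : @T1Space (X ⊕ W) (AWTop f)) : T1Space W :=
  @t1Space_of_injective_of_continuous _ _ _ (AWTop f) _ Sum.inr_injective continuous_inr_AWTop h

theorem inr_mem_closure_inl_image_iff (hf : Admissible f) (S : Set X) (y : W) :
    Sum.inr y ∈ closure[AWTop f] (Sum.inl '' S) ↔ y ∈ f (closure S) := by
  constructor
  · intro hy
    have hA : Sum.inl '' closure S ∪ Sum.inr '' f (closure S) ∈ AWClosed f := by
      have hX : Sum.inl ⁻¹' (Sum.inl '' closure S ∪ Sum.inr '' f (closure S)) = closure S := by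
        rw [preimage_union, Sum.inl_injective.preimage_image, preimage_inl_image_inr, union_empty]
      have hW : Sum.inr ⁻¹' (Sum.inl '' closure S ∪ Sum.inr '' f (closure S)) = f (closure S) := by
        rw [preimage_union, Sum.inr_injective.preimage_image, preimage_inr_image_inl, empty_union]
      refine ⟨?_, ?_, ?_⟩
      · rw [hX]; exact isClosed_closure
      · rw [hW]; exact hf.1 _ isClosed_closure
      · rw [hX]; exact subset_union_right
    have hsub := @closure_minimal _ (AWTop f) _ _
      ((image_mono subset_closure).trans subset_union_left) ((isClosed_AWTop_iff hf).2 hA)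
    simpa using hsub hy
  · intro hy
    have hC := (isClosed_AWTop_iff hf).1 (@isClosed_closure _ (AWTop f) (Sum.inl '' S))
    have hS : closure S ⊆ Sum.inl ⁻¹' closure[AWTop f] (Sum.inl '' S) :=
      closure_minimal (fun x hx => @subset_closure _ (AWTop f) _ _ (mem_image_of_mem _ hx)) hC.1
    exact hC.2.2 ⟨y, hf.mono isClosed_closure hC.1 hS hy, rfl⟩

theorem PerspRel.inr_mem_closure_of_subset_bnh {e : Set (X × X)} (he : PerspRel f e)
    {S S' : Set X} (h : S' ⊆ Bnh S e) {y : W}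
    (hy : Sum.inr y ∈ closure[AWTop f] (Sum.inl '' S')) :
    Sum.inr y ∈ closure[AWTop f] (Sum.inl '' S) := by
  rw [@mem_closure_iff _ (AWTop f)] at hy ⊢
  intro V hV hyV
  obtain ⟨U, hU, hyU, -, hUV⟩ := he.2 y V hV hyV
  obtain ⟨_, hzU, s', hs', rfl⟩ := hy U hU hyU
  obtain ⟨s, hs, hs's⟩ := h hs'
  exact ⟨Sum.inl s, hUV (s', s) hs's hzU, s, hs, rfl⟩

theorem PerspRel.image_closure_subset (hf : Admissible f) {e : Set (X × X)} (he : PerspRel f e)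
    {S S' : Set X} (h : S' ⊆ Bnh S e) : f (closure S') ⊆ f (closure S) := fun y hy =>
  (inr_mem_closure_inl_image_iff hf S y).1 <|
    he.inr_mem_closure_of_subset_bnh h ((inr_mem_closure_inl_image_iff hf S' y).2 hy)

theorem PerspCompactification.image_closure_eq {ε : Set (Set (X × X))}
    (hf : PerspCompactification ε f) {e e' : Set (X × X)} (he : e ∈ ε) (he' : e' ∈ ε)
    {S S' : Set X} (h : S ⊆ Bnh S' e) (h' : S' ⊆ Bnh S e') : f (closure S) = f (closure S') :=
  (PerspRel.image_closure_subset hf.1.1 (hf.2 e he) h).antisymm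
    (PerspRel.image_closure_subset hf.1.1 (hf.2 e' he') h')

end ArtinWraith

section Coarse

variable {X Y : Type*}

theorem bnh_mono {S S' : Set X} (h : S ⊆ S') (e : Set (X × X)) : Bnh S e ⊆ Bnh S' e :=
  fun _ ⟨y, hy, hxy⟩ => ⟨y, h hy, hxy⟩

theorem bnh_bnh_subset (S : Set X) (e e' : Set (X × X)) :
    Bnh (Bnh S e) e' ⊆ Bnh S (compRel e' e) :=
  fun _ ⟨_, ⟨s, hs, hys⟩, hxy⟩ => ⟨s, hs, _, hxy, hys⟩

theorem image_bnh_subset (π : Y → X) (T : Set Y) (d : Set (Y × Y)) :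
    π '' Bnh T d ⊆ Bnh (π '' T) (Prod.map π π '' d) :=
  fun _ ⟨_, ⟨t, ht, hyt⟩, hx⟩ => ⟨π t, ⟨t, ht, rfl⟩, _, hyt, hx ▸ rfl⟩

theorem closure_subset_bnh [TopologicalSpace Y] {d : Set (Y × Y)} (hd : d ∈ 𝓝ˢ (diagonal Y))
    (T : Set Y) : closure T ⊆ Bnh T d := by
  intro y hy
  have hdy : {t | (y, t) ∈ d} ∈ 𝓝 y :=
    (Continuous.prodMk_right y).continuousAt.preimage_mem_nhds
      (mem_nhdsSet_iff_forall.1 hd (y, y) rfl)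
  obtain ⟨t, hyt, ht⟩ := mem_closure_iff_nhds.1 hy _ hdy
  exact ⟨t, ht, hyt⟩

end Coarse

theorem PerspCompactification.pullbackAW_closure_image_eq {X Y W : Type*}
    [TopologicalSpace X] [TopologicalSpace Y] [TopologicalSpace W]
    {ε : Set (Set (X × X))} {η : Set (Set (Y × Y))} (hε : IsCoarseStructure ε)
    {d : Set (Y × Y)} (hd : d ∈ η) (hdiag : d ∈ 𝓝ˢ (diagonal Y))
    {π : Y → X} {ϖ : X → Y} (hπ : Bornologous η ε π) (hqi : Close ε (π ∘ ϖ) id)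
    {f : Set X → Set W} (hf : PerspCompactification ε f) (S : Set X) :
    pullbackAW f π id (closure (ϖ '' S)) = closure (f (closure S)) := by
  set e : Set (X × X) := range fun x => (π (ϖ x), x)
  have hπϖ : π '' (ϖ '' S) ⊆ Bnh S e := by
    rintro _ ⟨_, ⟨x, hx, rfl⟩, rfl⟩
    exact ⟨x, hx, x, rfl⟩
  have hclose : π '' closure (ϖ '' S) ⊆ Bnh S (compRel (Prod.map π π '' d) e) :=
    calc π '' closure (ϖ '' S) ⊆ π '' Bnh (ϖ '' S) d := image_mono (closure_subset_bnh hdiag _)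
      _ ⊆ Bnh (π '' (ϖ '' S)) (Prod.map π π '' d) := image_bnh_subset π _ d
      _ ⊆ Bnh (Bnh S e) (Prod.map π π '' d) := bnh_mono hπϖ _
      _ ⊆ Bnh S (compRel (Prod.map π π '' d) e) := bnh_bnh_subset S e _
  have hclose' : S ⊆ Bnh (π '' closure (ϖ '' S)) (invRel e) := fun x hx =>
    ⟨π (ϖ x), ⟨ϖ x, subset_closure ⟨x, hx, rfl⟩, rfl⟩, x, rfl⟩
  rw [pullbackAW, preimage_id, hf.image_closure_eq (hε.2.2.2.2 _ (hπ d hd) _ hqi)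
    (hε.2.2.2.1 _ hqi) hclose hclose']

theorem stmt14_general {X Y W : Type*} [TopologicalSpace X] [TopologicalSpace Y] [TopologicalSpace W]
    (ε : Set (Set (X × X))) (η : Set (Set (Y × Y)))
    (hε : IsCoarseStructure ε) (hηprop : ProperCoarse η)
    (π : Y → X) (ϖ : X → Y)
    (hπ : CoarseMap η ε π)
    (hqi1 : Close ε (π ∘ ϖ) id)
    (f : Set X → Set W) (hf : PerspCompactification ε f)
    (Ψ : Set (Set ℝ × (ℝ → X)))
    (hacc : AccessibleComp f Ψ) :
    (∀ w : W, ∃ r ∈ Ψ,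
      pullbackAW f π (id : W → W) (closure ((fun t => ϖ (r.2 t)) '' r.1)) = {w}) ∧
    ∀ r ∈ Ψ, ∃ w : W,
      pullbackAW f π (id : W → W) (closure ((fun t => ϖ (r.2 t)) '' r.1)) = {w} := by
  have : T1Space W := t1Space_of_t1Space_AWTop (@T2Space.t1Space _ (AWTop f) hf.1.2.2.1)
  obtain ⟨d, hd, hdiag⟩ := hηprop.1
  have hray : ∀ r : Set ℝ × (ℝ → X), ∀ w : W, f (closure (r.2 '' r.1)) = {w} →
      pullbackAW f π id (closure ((fun t => ϖ (r.2 t)) '' r.1)) = {w} := fun r w hr => by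
    rw [← image_image, hf.pullbackAW_closure_image_eq hε hd hdiag hπ.1 hqi1, hr, closure_singleton]
  refine ⟨fun w => ?_, fun r hr => ?_⟩
  · obtain ⟨r, hr, hw⟩ := hacc.1 w
    exact ⟨r, hr, hray r w hw⟩
  · obtain ⟨w, hw⟩ := hacc.2 r hr
    exact ⟨w, hray r w hw⟩

/-- if `π : Y → X` is a coarse equivalence with coarse inverse `ϖ` and
`X +_f W` is a `Ψ`-accessible perspective compactification, then the induced
compactification `Y +_{f*} W` is `ϖ(Ψ)`-accessible. -/
theorem stmt14 {X Y W : Type*} [TopologicalSpace X] [T2Space X] [LocallyCompactSpace X]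
    [ParacompactSpace X] [TopologicalSpace Y] [T2Space Y] [LocallyCompactSpace Y]
    [ParacompactSpace Y] [TopologicalSpace W]
    (ε : Set (Set (X × X))) (η : Set (Set (Y × Y)))
    (hε : IsCoarseStructure ε) (hεconn : CoarselyConnected ε) (hεprop : ProperCoarse ε)
    (hη : IsCoarseStructure η) (hηconn : CoarselyConnected η) (hηprop : ProperCoarse η)
    (π : Y → X) (ϖ : X → Y)
    (hπ : CoarseMap η ε π) (hϖ : CoarseMap ε η ϖ)
    (hqi1 : Close ε (π ∘ ϖ) id) (hqi2 : Close η (ϖ ∘ π) id)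
    (f : Set X → Set W) (hf : PerspCompactification ε f)
    (p : X) (Ψ : Set (Set ℝ × (ℝ → X))) (hΨ : GoodRayFamily p Ψ)
    (hacc : AccessibleComp f Ψ) :
    (∀ w : W, ∃ r ∈ Ψ,
      pullbackAW f π (id : W → W) (closure ((fun t => ϖ (r.2 t)) '' r.1)) = {w}) ∧
    ∀ r ∈ Ψ, ∃ w : W,
      pullbackAW f π (id : W → W) (closure ((fun t => ϖ (r.2 t)) '' r.1)) = {w} :=
  stmt14_general ε η hε hηprop π ϖ hπ hqi1 f hf Ψ hacc

end Paper
end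

section
/- Let (X, ε) and (Y, η) be locally compact paracompact Hausdorff spaces with proper coarsely connected coarse structures, X +_f Z and Y +_g Z' perspective compactifications, and π+ϖ : Y +_g Z' → X +_f Z a continuous map, where π : Y → X is a coarse map. If π' : Y → X is a continuous coarse map that is close to π, then the map π'+ϖ : Y +_g Z' → X +_f Z is continuous. -/
namespace Paper

open Set Topology

/-- `Sum.inl` is continuous into the Artin–Wraith glueing. -/
lemma aw_inl_continuous {X W : Type*} [TopologicalSpace X] [TopologicalSpace W]
    (f : Set X → Set W) :
    Continuous[‹TopologicalSpace X›, AWTop f] (Sum.inl : X → X ⊕ W) := by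
  apply continuous_generateFrom_iff.mpr
  rintro s ⟨A, hA, rfl⟩
  have h : Sum.inl ⁻¹' Aᶜ = (Sum.inl ⁻¹' A)ᶜ := rfl
  rw [h]
  exact hA.1.isOpen_compl

/-- `Sum.inl` is an open map into the Artin–Wraith glueing. -/
lemma aw_inl_image_open {Y W : Type*} [TopologicalSpace Y] [TopologicalSpace W]
    (g : Set Y → Set W) {U : Set Y} (hU : IsOpen U) :
    IsOpen[AWTop g] (Sum.inl '' U : Set (Y ⊕ W)) := by
  apply TopologicalSpace.isOpen_generateFrom_of_mem
  refine ⟨(Sum.inl '' U)ᶜ, ⟨?_, ?_, ?_⟩, compl_compl _⟩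
  · have h : Sum.inl ⁻¹' (Sum.inl '' U : Set (Y ⊕ W))ᶜ = Uᶜ := by
      ext y; simp
    rw [h]; exact hU.isClosed_compl
  · have h : Sum.inr ⁻¹' (Sum.inl '' U : Set (Y ⊕ W))ᶜ = Set.univ := by
      ext w; simp
    rw [h]; exact isClosed_univ
  · rintro _ ⟨w, _, rfl⟩
    simp

/-- changing maps: if `π+ϖ : Y +_g Z' → X +_f Z` is continuous, `π` is a
coarse map and `π'` is a continuous coarse map close to `π`, then
`π'+ϖ : Y +_g Z' → X +_f Z` is continuous. -/
theorem stmt16 {X Y Z Z' : Type*} [TopologicalSpace X] [T2Space X] [LocallyCompactSpace X]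
    [ParacompactSpace X] [TopologicalSpace Y] [T2Space Y] [LocallyCompactSpace Y]
    [ParacompactSpace Y] [TopologicalSpace Z] [TopologicalSpace Z']
    (ε : Set (Set (X × X))) (η : Set (Set (Y × Y)))
    (hε : IsCoarseStructure ε) (hεconn : CoarselyConnected ε) (hεprop : ProperCoarse ε)
    (hη : IsCoarseStructure η) (hηconn : CoarselyConnected η) (hηprop : ProperCoarse η)
    (f : Set X → Set Z) (g : Set Y → Set Z')
    (hf : PerspCompactification ε f) (hg : PerspCompactification η g)
    (π : Y → X) (ϖ : Z' → Z) (hπ : CoarseMap η ε π)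
    (hcont : Continuous[AWTop g, AWTop f] (Sum.map π ϖ))
    (π' : Y → X) (hπ'c : Continuous π') (hπ' : CoarseMap η ε π')
    (hclose : Close ε π π') :
    Continuous[AWTop g, AWTop f] (Sum.map π' ϖ) := by
  letI : TopologicalSpace (Y ⊕ Z') := AWTop g
  letI : TopologicalSpace (X ⊕ Z) := AWTop f
  rw [continuous_def]
  intro V hV
  rw [isOpen_iff_forall_mem_open]
  rintro (y | w) hp
  · -- point of the locally compact part
    have hVX : IsOpen (Sum.inl ⁻¹' V : Set X) :=
      (aw_inl_continuous f).isOpen_preimage V hV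
    refine ⟨Sum.inl '' (π' ⁻¹' (Sum.inl ⁻¹' V)), ?_, ?_, ⟨y, hp, rfl⟩⟩
    · rintro _ ⟨y', hy', rfl⟩; exact hy'
    · exact aw_inl_image_open g (hVX.preimage hπ'c)
  · -- point of the remainder: use perspectivity of the closeness entourage
    have hz : Sum.inr (ϖ w) ∈ V := hp
    obtain ⟨U, hUopen, hzU, hUV, hUe⟩ := (hf.2 _ hclose).2 (ϖ w) V hV hz
    refine ⟨Sum.map π ϖ ⁻¹' U, ?_, hcont.isOpen_preimage U hUopen, hzU⟩
    rintro (y' | w') hq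
    · exact hUe (π y', π' y') ⟨y', rfl⟩ hq
    · exact hUV hq

end Paper
end

section
/- Let (X, ε) be a locally compact paracompact Hausdorff space with a proper coarsely connected coarse structure and let X +_f W be a perspective compactification of X. If A, B ⊆ X and there exists e ∈ ε with A ⊆ 𝔅(B, e), then Cl_{X +_f W}(A) − X ⊆ Cl_{X +_f W}(B) − X. -/
namespace Paper

open Set Topology

/-- in a perspective compactification `X +_f W`, if `A ⊆ 𝔅(B, e)` for
some entourage `e ∈ ε`, then `Cl(A) − X ⊆ Cl(B) − X`. -/
theorem stmt19 {X W : Type*} [TopologicalSpace X] [T2Space X] [LocallyCompactSpace X]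
    [ParacompactSpace X] [TopologicalSpace W]
    (ε : Set (Set (X × X))) (hε : IsCoarseStructure ε)
    (hconn : CoarselyConnected ε) (hprop : ProperCoarse ε)
    (f : Set X → Set W) (hf : PerspCompactification ε f)
    (A B : Set X) (e : Set (X × X)) (he : e ∈ ε) (hAB : A ⊆ Bnh B e) :
    @closure (X ⊕ W) (AWTop f) (Sum.inl '' A) \ Set.range Sum.inl ⊆
      @closure (X ⊕ W) (AWTop f) (Sum.inl '' B) \ Set.range Sum.inl := by
  letI t : TopologicalSpace (X ⊕ W) := AWTop f
  rintro y ⟨hyA, hyX⟩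
  obtain w | w := y
  · exact absurd ⟨w, rfl⟩ hyX
  refine ⟨?_, hyX⟩
  by_contra hB
  have hV : IsOpen[AWTop f] (closure (Sum.inl '' B) : Set (X ⊕ W))ᶜ :=
    isClosed_closure.isOpen_compl
  obtain ⟨U, hUopen, hwU, hUV, hUe⟩ := (hf.2 e he).2 w _ hV hB
  obtain ⟨z, hzU, hzA⟩ := (_root_.mem_closure_iff.1 hyA) U hUopen hwU
  obtain ⟨a, haA, rfl⟩ := hzA
  obtain ⟨b, hbB, hab⟩ := hAB haA
  exact hUe (a, b) hab hzU (subset_closure ⟨b, hbB, rfl⟩)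


end Paper
end
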